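/- arXiv:funct-an/9709001 — 3 statements merged into one kernel-verified Lean document; each statement's English description precedes it below -/
import Mathlib

section
/- For every real number p, every β with |β| ≤ π/2, and every ω ≥ 0, the exterior-scaled momentum p_{iβ}(p), defined by p_{iβ}(p) = p for |p| < ω and p_{iβ}(p) = ±ω + e^{iβ}(p ∓ ω) for ±p ≥ ω, satisfies p² ≥ |p_{iβ}(p)|² ≥ p² cos β. -/
open Real Complex

/-!
Write `a = sign p · ω` and `d = p - a`. By the law of cosines the dilated momentum
`a + e^{iβ} d` has squared modulus `a² + 2ad cos β + d²`, while `p² = a² + 2ad + d²`.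
Since `cos β ≤ 1`, the lower bound is `(a² + d²)(1 - cos β) ≥ 0`, and the upper bound is
`2ad(1 - cos β) ≥ 0`, which holds because outside `|p| < ω` the shift `a` and the remainder
`d` have the same sign.
-/

theorem Complex.sq_norm_ofReal_add_exp_mul_I_mul_ofReal (a d θ : ℝ) :
    ‖(a : ℂ) + exp (θ * I) * d‖ ^ 2 = a ^ 2 + 2 * a * d * Real.cos θ + d ^ 2 := by
  rw [Complex.sq_norm, normSq_apply, exp_mul_I, ← ofReal_cos, ← ofReal_sin]
  simp only [add_re, add_im, mul_re, mul_im, ofReal_re, ofReal_im, I_re, I_im]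
  linear_combination d ^ 2 * Real.sin_sq_add_cos_sq θ

theorem Complex.sq_mul_cos_le_sq_norm_ofReal_add_exp_mul_I_mul_ofReal (a d θ : ℝ) :
    (a + d) ^ 2 * Real.cos θ ≤ ‖(a : ℂ) + exp (θ * I) * d‖ ^ 2 := by
  rw [sq_norm_ofReal_add_exp_mul_I_mul_ofReal]
  nlinarith [mul_nonneg (add_nonneg (sq_nonneg a) (sq_nonneg d)) (sub_nonneg.2 (cos_le_one θ))]

theorem Complex.sq_norm_ofReal_add_exp_mul_I_mul_ofReal_le {a d : ℝ} (had : 0 ≤ a * d) (θ : ℝ) :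
    ‖(a : ℂ) + exp (θ * I) * d‖ ^ 2 ≤ (a + d) ^ 2 := by
  rw [sq_norm_ofReal_add_exp_mul_I_mul_ofReal]
  nlinarith [mul_nonneg had (sub_nonneg.2 (cos_le_one θ))]

theorem Real.sign_mul_mul_sub_sign_mul_nonneg {ω p : ℝ} (hω : 0 ≤ ω) (hp : ω ≤ |p|) :
    0 ≤ sign p * ω * (p - sign p * ω) := by
  rcases lt_trichotomy p 0 with hneg | rfl | hpos
  · rw [sign_of_neg hneg, abs_of_neg hneg] at *
    nlinarith
  · simp
  · rw [sign_of_pos hpos, abs_of_pos hpos] at *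
    nlinarith

theorem exterior_scaled_momentum_modulus_bounds_general
    (ω β p : ℝ) (hω : 0 ≤ ω)
    (pb : ℂ)
    (hpb : pb = if |p| < ω then (p : ℂ)
      else ((Real.sign p * ω : ℝ) : ℂ) +
        Complex.exp (β * Complex.I) * ((p : ℂ) - ((Real.sign p * ω : ℝ) : ℂ))) :
    p ^ 2 * Real.cos β ≤ ‖pb‖ ^ 2 ∧ ‖pb‖ ^ 2 ≤ p ^ 2 := by
  subst hpb
  split_ifs with hp
  · rw [norm_real, Real.norm_eq_abs, sq_abs]
    exact ⟨mul_le_of_le_one_right (sq_nonneg p) (cos_le_one β), le_rfl⟩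
  · set a := sign p * ω
    have hp_sq : p ^ 2 = (a + (p - a)) ^ 2 := by rw [add_sub_cancel]
    rw [← ofReal_sub, hp_sq]
    exact ⟨sq_mul_cos_le_sq_norm_ofReal_add_exp_mul_I_mul_ofReal a (p - a) β,
      sq_norm_ofReal_add_exp_mul_I_mul_ofReal_le
        (sign_mul_mul_sub_sign_mul_nonneg hω (not_lt.1 hp)) β⟩

/-- For every real `p`, every `β` with `|β| ≤ π/2` and every `ω ≥ 0`,
the exterior-scaled momentum `p_{iβ}(p)` satisfies `p² ≥ |p_{iβ}(p)|² ≥ p² cos β`. -/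
theorem exterior_scaled_momentum_modulus_bounds
    (ω β p : ℝ) (hβ : |β| ≤ π / 2) (hω : 0 ≤ ω)
    (pb : ℂ)
    (hpb : pb = if |p| < ω then (p : ℂ)
      else ((Real.sign p * ω : ℝ) : ℂ) +
        Complex.exp (β * Complex.I) * ((p : ℂ) - ((Real.sign p * ω : ℝ) : ℂ))) :
    p ^ 2 * Real.cos β ≤ ‖pb‖ ^ 2 ∧ ‖pb‖ ^ 2 ≤ p ^ 2 :=
  exterior_scaled_momentum_modulus_bounds_general ω β p hω pb hpb
end

section
/- For every real p, |p² − p_{iβ}(p)²| ≤ 6 |sin(β/2)| p². -/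
/-!
Outside the window `|p| < ω`, with `a = sgn(p)·ω` and `e = e^{iβ}`, one has `p_{iβ} = a + e(p - a)`,
so `p² - p_{iβ}² = (1 - e)(p - a)(p + p_{iβ})`. Since `0 ≤ ω ≤ |p|`, both `|a|` and `|p - a|` are at
most `|p|`, whence `|p + p_{iβ}| ≤ 3|p|`; finally `|1 - e| = 2|sin(β/2)|`.
-/

open Real Complex

theorem norm_sq_sub_sq_rotate_le {𝕜 : Type*} [NormedField 𝕜] {p a e : 𝕜} (he : ‖e‖ ≤ 1)
    (ha : ‖a‖ ≤ ‖p‖) (hpa : ‖p - a‖ ≤ ‖p‖) :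
    ‖p ^ 2 - (a + e * (p - a)) ^ 2‖ ≤ 3 * ‖1 - e‖ * ‖p‖ ^ 2 := by
  have hfactor : p ^ 2 - (a + e * (p - a)) ^ 2 = (1 - e) * (p - a) * (p + (a + e * (p - a))) := by
    ring
  have hsum : ‖p + (a + e * (p - a))‖ ≤ 3 * ‖p‖ :=
    calc ‖p + (a + e * (p - a))‖ ≤ ‖p‖ + (‖a‖ + ‖e‖ * ‖p - a‖) := by
          grw [norm_add_le, norm_add_le, norm_mul]
      _ ≤ ‖p‖ + (‖p‖ + 1 * ‖p‖) := by gcongr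
      _ = 3 * ‖p‖ := by ring
  calc ‖p ^ 2 - (a + e * (p - a)) ^ 2‖ = ‖1 - e‖ * ‖p - a‖ * ‖p + (a + e * (p - a))‖ := by
        rw [hfactor, norm_mul, norm_mul]
    _ ≤ ‖1 - e‖ * ‖p‖ * (3 * ‖p‖) := by gcongr
    _ = 3 * ‖1 - e‖ * ‖p‖ ^ 2 := by ring

theorem norm_one_sub_exp_ofReal_mul_I (β : ℝ) :
    ‖1 - Complex.exp (β * I)‖ = 2 * |Real.sin (β / 2)| := by
  rw [norm_sub_rev, mul_comm, norm_exp_I_mul_ofReal_sub_one, norm_mul, Real.norm_two,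
    Real.norm_eq_abs]

theorem abs_sign_mul_of_le_abs {ω p : ℝ} (hω : 0 ≤ ω) (h : ω ≤ |p|) :
    |Real.sign p * ω| = ω := by
  rcases lt_trichotomy p 0 with hp | rfl | hp
  · rw [Real.sign_of_neg hp, neg_one_mul, abs_neg, abs_of_nonneg hω]
  · simpa using (le_antisymm (by simpa using h) hω).symm
  · rw [Real.sign_of_pos hp, one_mul, abs_of_nonneg hω]

theorem abs_sub_sign_mul_of_le_abs {ω p : ℝ} (hω : 0 ≤ ω) (h : ω ≤ |p|) :
    |p - Real.sign p * ω| = |p| - ω := by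
  rcases lt_trichotomy p 0 with hp | rfl | hp
  · rw [abs_of_neg hp] at h ⊢
    rw [Real.sign_of_neg hp, abs_of_nonpos (by linarith)]
    ring
  · simpa using le_antisymm (by simpa using h) hω
  · rw [abs_of_pos hp] at h ⊢
    rw [Real.sign_of_pos hp, abs_of_nonneg (by linarith)]
    ring

theorem exterior_scaled_momentum_sq_difference_bound_general
    (ω β p : ℝ) (hω : 0 ≤ ω)
    (pb : ℂ)
    (hpb : pb = if |p| < ω then (p : ℂ)
      else ((Real.sign p * ω : ℝ) : ℂ) +
        Complex.exp (β * Complex.I) * ((p : ℂ) - ((Real.sign p * ω : ℝ) : ℂ))) :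
    ‖(p : ℂ) ^ 2 - pb ^ 2‖ ≤ 6 * |Real.sin (β / 2)| * p ^ 2 := by
  split_ifs at hpb with hp
  · simp only [hpb, sub_self, norm_zero]
    positivity
  · replace hp := not_lt.1 hp
    have ha : ‖((Real.sign p * ω : ℝ) : ℂ)‖ ≤ ‖(p : ℂ)‖ := by
      simp only [Complex.norm_real, Real.norm_eq_abs, abs_sign_mul_of_le_abs hω hp, hp]
    have hpa : ‖(p : ℂ) - ((Real.sign p * ω : ℝ) : ℂ)‖ ≤ ‖(p : ℂ)‖ := by
      rw [← Complex.ofReal_sub]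
      simp only [Complex.norm_real, Real.norm_eq_abs, abs_sub_sign_mul_of_le_abs hω hp]
      linarith
    calc ‖(p : ℂ) ^ 2 - pb ^ 2‖ ≤ 3 * ‖1 - Complex.exp (β * I)‖ * ‖(p : ℂ)‖ ^ 2 :=
          hpb ▸ norm_sq_sub_sq_rotate_le (Complex.norm_exp_ofReal_mul_I β).le ha hpa
      _ = 6 * |Real.sin (β / 2)| * p ^ 2 := by
        rw [norm_one_sub_exp_ofReal_mul_I, Complex.norm_real, Real.norm_eq_abs, sq_abs]
        ring

/-- For every real `p` (with `|β| ≤ π`, `ω ≥ 0`):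
`|p² − p_{iβ}(p)²| ≤ 6 |sin(β/2)| p²`. -/
theorem exterior_scaled_momentum_sq_difference_bound
    (ω β p : ℝ) (hβ : |β| ≤ π) (hω : 0 ≤ ω)
    (pb : ℂ)
    (hpb : pb = if |p| < ω then (p : ℂ)
      else ((Real.sign p * ω : ℝ) : ℂ) +
        Complex.exp (β * Complex.I) * ((p : ℂ) - ((Real.sign p * ω : ℝ) : ℂ))) :
    ‖(p : ℂ) ^ 2 - pb ^ 2‖ ≤ 6 * |Real.sin (β / 2)| * p ^ 2 :=
  exterior_scaled_momentum_sq_difference_bound_general ω β p hω pb hpb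
end

section
/- Resolvent difference formula for exterior-dilated momentum operators: for α, β real with the resolvents defined at z, (r_{iβ}(z) − r_{iα}(z))/(2i) = z sin((β−α)/2) · r_{iα}(z) χ_{Ω_e} r_{iβ}(z) + sin((β−α)/4) ( e^{-i(β−α)/4} χ_{Ω_e} r_{iβ}(z) + e^{i(β−α)/4} r_{iα}(z) χ_{Ω_e} ), where r_{iθ}(z) := (D_{iθ} − z)^{-1} and χ_{Ω_e} is multiplication by the indicator of Ω_e = ℝ∖[−ω,ω]. -/
/-!
Let `S` multiply by `e^{-i(β-α)/2}` on `Ω_e` and put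
`g = (i/2)(r_{iα} - S r_{iβ})u - z sin((β-α)/2) r_{iα} χ r_{iβ} u
      - sin((β-α)/4) e^{i(β-α)/4} r_{iα} χ u`.
The factor `S` turns the phase jump `e^{iβ/2}` of `r_{iβ}u` at `±ω` into `e^{iα/2}`, so `g` lies
in the domain of `D_{iα}`, and the four resolvent equations give `(D_{iα} - z) g = 0`.
But `D_{iα}` has no eigenvalues: an eigenfunction is an exponential on each of the three intervals,
one of the two exterior exponentials is square integrable only if it vanishes, and the jump
conditions pass the vanishing on to the other two pieces. Hence `g = 0`, which is the formula,
because `(i/2)(e^{-i(β-α)/2} - 1) = sin((β-α)/4) e^{-i(β-α)/4}`.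
-/

open MeasureTheory Real Complex Filter Topology

/-- `v` (with derivative `v'` off `±ω`) lies in the domain of the exterior-dilated
momentum operator `D_{iθ}` at dilation parameter `iθ`: piecewise `H¹` on
`(-ω,ω)` and `ℝ∖[−ω,ω]` with the phase-jump `v(±ω±0) = e^{iθ/2} v(±ω∓0)`. -/
def InDomDilated (ω θ : ℝ) (v v' : ℝ → ℂ) : Prop :=
  MemLp v 2 (volume : Measure ℝ) ∧ MemLp v' 2 (volume : Measure ℝ) ∧
  (∀ t : ℝ, t ≠ ω → t ≠ -ω → HasDerivAt v (v' t) t) ∧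
  ∃ Lpo Lpi Lmo Lmi : ℂ,
    Tendsto v (nhdsWithin ω (Set.Ioi ω)) (nhds Lpo) ∧
    Tendsto v (nhdsWithin ω (Set.Iio ω)) (nhds Lpi) ∧
    Tendsto v (nhdsWithin (-ω) (Set.Iio (-ω))) (nhds Lmo) ∧
    Tendsto v (nhdsWithin (-ω) (Set.Ioi (-ω))) (nhds Lmi) ∧
    Lpo = Complex.exp ((θ / 2 : ℝ) * Complex.I) * Lpi ∧
    Lmo = Complex.exp ((θ / 2 : ℝ) * Complex.I) * Lmi

/-- Pointwise action of the exterior-dilated momentum operator `D_{iθ}`. -/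
noncomputable def DilatedD (ω θ : ℝ) (v' : ℝ → ℂ) : ℝ → ℂ := fun t =>
  if |t| < ω then -Complex.I * v' t
  else -Complex.I * Complex.exp (-(θ : ℝ) * Complex.I) * v' t

/-- Indicator of the exterior region `Ω_e = ℝ ∖ [−ω, ω]`. -/
noncomputable def chiExt (ω : ℝ) : ℝ → ℂ := fun t => if ω ≤ |t| then 1 else 0

open Set

theorem ofReal_sin_eq_cexp (x : ℝ) : (Real.sin x : ℂ) = (cexp (-x * I) - cexp (x * I)) * I / 2 := by
  rw [Complex.ofReal_sin, Complex.sin]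

theorem exists_eq_mul_cexp_of_hasDerivAt {f f' : ℝ → ℂ} {c : ℂ} {s : Set ℝ} (hs : s.OrdConnected)
    (hf : ∀ t ∈ s, HasDerivAt f (f' t) t) (hode : ∀ᵐ t, t ∈ s → f' t = c * f t) {x : ℝ}
    (hx : x ∈ s) : ∃ K, ∀ y ∈ s, f y = K * cexp (c * y) := by
  refine ⟨f x * cexp (-(c * x)), fun y hy => ?_⟩
  set F : ℝ → ℂ := fun t => f t * cexp (-(c * t))
  have hsub : uIcc x y ⊆ s := hs.uIcc_subset hx hy
  have hF : ∀ t ∈ uIcc x y, HasDerivAt F ((f' t - c * f t) * cexp (-(c * t))) t := by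
    intro t ht
    have he : HasDerivAt (fun t : ℝ => cexp (-(c * t))) (cexp (-(c * t)) * -c) t := by
      simpa using ((ofRealCLM.hasDerivAt (x := t)).const_mul c).neg.cexp
    exact ((hf t (hsub ht)).mul he).congr_deriv (by ring)
  have hF' : ∀ᵐ t, t ∈ uIoc x y → (f' t - c * f t) * cexp (-(c * t)) = 0 := by
    filter_upwards [hode] with t ht hmem
    rw [ht (hsub (Ioc_subset_Icc_self hmem)), sub_self, zero_mul]
  have hconst : F y = F x := by
    rw [← sub_eq_zero, ← intervalIntegral.integral_eq_sub_of_hasDerivAt hF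
      ((intervalIntegrable_const (c := (0 : ℂ))).congr_ae ?_),
      intervalIntegral.integral_congr_ae hF', intervalIntegral.integral_zero]
    filter_upwards [(ae_restrict_iff' measurableSet_uIoc).2 hF'] with t ht
    exact ht.symm
  calc f y = F y * cexp (c * y) := by simp [F, mul_assoc, ← Complex.exp_add]
    _ = _ := by rw [hconst]

theorem tendsto_of_eqOn_mul_cexp {f : ℝ → ℂ} {K c : ℂ} {s : Set ℝ} {l : Filter ℝ} {p : ℝ}
    (hl : l ≤ 𝓝 p) (hs : s ∈ l) (hf : ∀ y ∈ s, f y = K * cexp (c * y)) :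
    Tendsto f l (𝓝 (K * cexp (c * p))) :=
  (((continuous_const.mul (continuous_exp.comp (continuous_const.mul continuous_ofReal))).tendsto
    p).mono_left hl).congr' (eventually_of_mem hs fun y hy => (hf y hy).symm)

theorem MeasureTheory.MemLp.nonpos_of_le_norm {α E : Type*} [MeasurableSpace α]
    [NormedAddCommGroup E] {μ : Measure α} {p : ENNReal} {f : α → E} (hf : MemLp f p μ)
    (hp0 : p ≠ 0) (hp : p ≠ ⊤)
    {S : Set α} (hS : μ S = ⊤) {ε : ℝ} (hε : ∀ t ∈ S, ε ≤ ‖f t‖) : ε ≤ 0 := by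
  by_contra! hpos
  have := hf.meas_ge_lt_top hp0 hp (ε := ⟨ε, hpos.le⟩) (ne_of_gt hpos)
  exact this.ne (measure_mono_top (fun t ht => hε t ht) hS)

theorem MeasureTheory.MemLp.eq_zero_of_eqOn_mul_cexp_Ioi {f : ℝ → ℂ} {p : ENNReal} {K c : ℂ}
    {a : ℝ} (hf : MemLp f p) (hp0 : p ≠ 0) (hp : p ≠ ⊤) (hc : 0 ≤ c.re)
    (h : ∀ t ∈ Ioi a, f t = K * cexp (c * t)) : K = 0 := by
  by_contra hK
  refine (hf.nonpos_of_le_norm hp0 hp (volume_Ioi (a := a)) (ε := ‖K‖ * Real.exp (c.re * a))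
    fun t ht => ?_).not_gt (by positivity)
  rw [h t ht, norm_mul, Complex.norm_exp]
  gcongr
  simpa using mul_le_mul_of_nonneg_left (le_of_lt ht) hc

theorem MeasureTheory.MemLp.eq_zero_of_eqOn_mul_cexp_Iio {f : ℝ → ℂ} {p : ENNReal} {K c : ℂ}
    {a : ℝ} (hf : MemLp f p) (hp0 : p ≠ 0) (hp : p ≠ ⊤) (hc : c.re ≤ 0)
    (h : ∀ t ∈ Iio a, f t = K * cexp (c * t)) : K = 0 := by
  by_contra hK
  refine (hf.nonpos_of_le_norm hp0 hp (volume_Iio (a := a)) (ε := ‖K‖ * Real.exp (c.re * a))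
    fun t ht => ?_).not_gt (by positivity)
  rw [h t ht, norm_mul, Complex.norm_exp]
  gcongr
  simpa using mul_le_mul_of_nonpos_left (le_of_lt ht) hc

namespace InDomDilated

variable {ω θ : ℝ} {v v' w w' : ℝ → ℂ}

theorem add (hv : InDomDilated ω θ v v') (hw : InDomDilated ω θ w w') :
    InDomDilated ω θ (v + w) (v' + w') := by
  obtain ⟨hv2, hv'2, hvd, Lpo, Lpi, Lmo, Lmi, hpo, hpi, hmo, hmi, hjp, hjm⟩ := hv
  obtain ⟨hw2, hw'2, hwd, Mpo, Mpi, Mmo, Mmi, hpo', hpi', hmo', hmi', hjp', hjm'⟩ := hw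
  refine ⟨hv2.add hw2, hv'2.add hw'2, fun t h₁ h₂ => (hvd t h₁ h₂).add (hwd t h₁ h₂),
    Lpo + Mpo, Lpi + Mpi, Lmo + Mmo, Lmi + Mmi, hpo.add hpo', hpi.add hpi', hmo.add hmo',
    hmi.add hmi', by rw [hjp, hjp', mul_add], by rw [hjm, hjm', mul_add]⟩

theorem const_smul (c : ℂ) (hv : InDomDilated ω θ v v') : InDomDilated ω θ (c • v) (c • v') := by
  obtain ⟨hv2, hv'2, hvd, Lpo, Lpi, Lmo, Lmi, hpo, hpi, hmo, hmi, hjp, hjm⟩ := hv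
  refine ⟨hv2.const_smul c, hv'2.const_smul c, fun t h₁ h₂ => (hvd t h₁ h₂).const_smul c,
    c * Lpo, c * Lpi, c * Lmo, c * Lmi, hpo.const_smul c, hpi.const_smul c, hmo.const_smul c,
    hmi.const_smul c, by rw [hjp]; ring, by rw [hjm]; ring⟩

theorem sub (hv : InDomDilated ω θ v v') (hw : InDomDilated ω θ w w') :
    InDomDilated ω θ (v - w) (v' - w') := by
  simpa only [sub_eq_add_neg, neg_one_smul] using hv.add (hw.const_smul (-1))

end InDomDilated

noncomputable def extMul (ω : ℝ) (c : ℂ) (v : ℝ → ℂ) : ℝ → ℂ :=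
  fun t => if ω ≤ |t| then c * v t else v t

section extMul

variable {ω : ℝ} {c : ℂ} {v : ℝ → ℂ} {t : ℝ}

theorem extMul_of_le_abs (h : ω ≤ |t|) : extMul ω c v t = c * v t := if_pos h

theorem extMul_of_abs_lt (h : |t| < ω) : extMul ω c v t = v t := if_neg (not_le.2 h)

theorem extMul_eventuallyEq_of_lt_abs (h : ω < |t|) : extMul ω c v =ᶠ[𝓝 t] c • v :=
  eventually_of_mem ((isOpen_lt continuous_const continuous_abs).mem_nhds h) fun _ hs =>
    extMul_of_le_abs (le_of_lt hs)

theorem extMul_eventuallyEq_of_abs_lt (h : |t| < ω) : extMul ω c v =ᶠ[𝓝 t] v :=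
  eventually_of_mem ((isOpen_lt continuous_abs continuous_const).mem_nhds h) fun _ hs =>
    extMul_of_abs_lt hs

theorem MeasureTheory.MemLp.extMul {p : ENNReal} (hv : MemLp v p) : MemLp (extMul ω c v) p :=
  MemLp.piecewise (s := {t | ω ≤ |t|}) (measurableSet_le measurable_const measurable_abs)
    ((hv.const_mul c).restrict _) (hv.restrict _)

end extMul

theorem InDomDilated.extMul {ω θ : ℝ} (hω : 0 < ω) {v v' : ℝ → ℂ} (hv : InDomDilated ω θ v v')
    (θ' : ℝ) :
    InDomDilated ω θ' (_root_.extMul ω (cexp (((θ' - θ) / 2 : ℝ) * I)) v)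
      (_root_.extMul ω (cexp (((θ' - θ) / 2 : ℝ) * I)) v') := by
  set c := cexp (((θ' - θ) / 2 : ℝ) * I)
  obtain ⟨hv2, hv'2, hvd, Lpo, Lpi, Lmo, Lmi, hpo, hpi, hmo, hmi, hjp, hjm⟩ := hv
  have hc : c * cexp ((θ / 2 : ℝ) * I) = cexp ((θ' / 2 : ℝ) * I) := by
    rw [← Complex.exp_add]; congr 1; push_cast; ring
  have hout : ∀ s, ω < |s| → _root_.extMul ω c v s = c * v s := fun s hs =>
    extMul_of_le_abs hs.le
  have hin : ∀ s ∈ Ioo (-ω) ω, _root_.extMul ω c v s = v s := fun s hs =>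
    extMul_of_abs_lt (abs_lt.2 hs)
  refine ⟨hv2.extMul, hv'2.extMul, fun t h₁ h₂ => ?_, c * Lpo, Lpi, c * Lmo, Lmi,
    (hpo.const_mul c).congr' (eventually_mem_nhdsWithin.mono fun s hs =>
      (hout s (lt_of_lt_of_le hs (le_abs_self s))).symm),
    hpi.congr' (eventually_of_mem (Ioo_mem_nhdsLT (by linarith)) fun s hs => (hin s hs).symm),
    (hmo.const_mul c).congr' (eventually_mem_nhdsWithin.mono fun s hs =>
      (hout s (lt_of_lt_of_le (lt_neg_of_lt_neg hs) (neg_le_abs s))).symm),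
    hmi.congr' (eventually_of_mem (Ioo_mem_nhdsGT (by linarith)) fun s hs => (hin s hs).symm),
    by rw [hjp, ← mul_assoc, hc], by rw [hjm, ← mul_assoc, hc]⟩
  have habs : |t| ≠ ω := fun h => by rcases (abs_eq hω.le).1 h with h | h <;> contradiction
  rcases lt_or_gt_of_ne habs with h | h
  · rw [extMul_of_abs_lt h]
    exact (hvd t h₁ h₂).congr_of_eventuallyEq (extMul_eventuallyEq_of_abs_lt h)
  · rw [extMul_of_le_abs h.le]
    exact ((hvd t h₁ h₂).const_mul c).congr_of_eventuallyEq (extMul_eventuallyEq_of_lt_abs h)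

section DilatedD

variable {ω θ : ℝ} {v' : ℝ → ℂ} {t : ℝ} {w : ℂ}

theorem dilatedD_eq_iff_of_abs_lt (ht : |t| < ω) : DilatedD ω θ v' t = w ↔ v' t = I * w := by
  rw [DilatedD, if_pos ht]
  constructor <;> intro h
  · linear_combination I * h + v' t * I_sq
  · linear_combination -I * h - w * I_sq

theorem dilatedD_eq_iff_of_le_abs (ht : ω ≤ |t|) :
    DilatedD ω θ v' t = w ↔ v' t = I * cexp (θ * I) * w := by
  have hexp : cexp (θ * I) * cexp (-θ * I) = 1 := by rw [← Complex.exp_add]; simp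
  rw [DilatedD, if_neg (not_lt.2 ht)]
  constructor <;> intro h
  · linear_combination I * cexp (θ * I) * h + v' t * cexp (θ * I) * cexp (-θ * I) * I_sq
      - v' t * hexp
  · linear_combination -I * cexp (-θ * I) * h - w * cexp (θ * I) * cexp (-θ * I) * I_sq
      + w * hexp

end DilatedD

theorem exists_eq_mul_cexp_of_dilatedD_eq_mul {ω θ : ℝ} (hω : 0 < ω) {z : ℂ} {g g' : ℝ → ℂ}
    (hder : ∀ t, t ≠ ω → t ≠ -ω → HasDerivAt g (g' t) t)
    (hker : ∀ᵐ t, DilatedD ω θ g' t = z * g t) :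
    ∃ K₀ Kₚ Kₘ : ℂ, (∀ t ∈ Ioo (-ω) ω, g t = K₀ * cexp (I * z * t)) ∧
      (∀ t ∈ Ioi ω, g t = Kₚ * cexp (I * cexp (θ * I) * z * t)) ∧
      (∀ t ∈ Iio (-ω), g t = Kₘ * cexp (I * cexp (θ * I) * z * t)) := by
  have hode_in : ∀ᵐ t, t ∈ Ioo (-ω) ω → g' t = I * z * g t := by
    filter_upwards [hker] with t ht hmem
    rw [(dilatedD_eq_iff_of_abs_lt (abs_lt.2 hmem)).1 ht, ← mul_assoc]
  have hode_out : ∀ s : Set ℝ, (∀ t ∈ s, ω ≤ |t|) →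
      ∀ᵐ t, t ∈ s → g' t = I * cexp (θ * I) * z * g t := by
    intro s hs
    filter_upwards [hker] with t ht hmem
    rw [(dilatedD_eq_iff_of_le_abs (hs t hmem)).1 ht, ← mul_assoc]
  obtain ⟨K₀, h₀⟩ := exists_eq_mul_cexp_of_hasDerivAt ordConnected_Ioo
    (fun t ht => hder t ht.2.ne ht.1.ne') hode_in (x := 0) ⟨by linarith, hω⟩
  obtain ⟨Kₚ, hₚ⟩ := exists_eq_mul_cexp_of_hasDerivAt ordConnected_Ioi
    (fun t ht => hder t (ne_of_gt ht) (by linarith [ht.out]))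
    (hode_out _ fun t ht => le_abs.2 (.inl (le_of_lt ht))) (x := ω + 1) (by simp)
  obtain ⟨Kₘ, hₘ⟩ := exists_eq_mul_cexp_of_hasDerivAt ordConnected_Iio
    (fun t ht => hder t (by linarith [ht.out]) (ne_of_lt ht))
    (hode_out _ fun t ht => le_abs.2 (.inr (by linarith [ht.out]))) (x := -ω - 1) (by simp)
  exact ⟨K₀, Kₚ, Kₘ, h₀, hₚ, hₘ⟩

theorem InDomDilated.ae_eq_zero_of_dilatedD_eq_mul {ω θ : ℝ} (hω : 0 < ω) {z : ℂ}
    {g g' : ℝ → ℂ} (hg : InDomDilated ω θ g g') (hker : ∀ᵐ t, DilatedD ω θ g' t = z * g t) :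
    g =ᵐ[volume] 0 := by
  obtain ⟨hg2, -, hder, Lpo, Lpi, Lmo, Lmi, hpo, hpi, hmo, hmi, hjp, hjm⟩ := hg
  obtain ⟨K₀, Kₚ, Kₘ, h₀, hₚ, hₘ⟩ := exists_eq_mul_cexp_of_dilatedD_eq_mul hω hder hker
  have hLpo := tendsto_nhds_unique hpo
    (tendsto_of_eqOn_mul_cexp nhdsWithin_le_nhds self_mem_nhdsWithin hₚ)
  have hLpi := tendsto_nhds_unique hpi
    (tendsto_of_eqOn_mul_cexp nhdsWithin_le_nhds (Ioo_mem_nhdsLT (by linarith)) h₀)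
  have hLmo := tendsto_nhds_unique hmo
    (tendsto_of_eqOn_mul_cexp nhdsWithin_le_nhds self_mem_nhdsWithin hₘ)
  have hLmi := tendsto_nhds_unique hmi
    (tendsto_of_eqOn_mul_cexp nhdsWithin_le_nhds (Ioo_mem_nhdsGT (by linarith)) h₀)
  have hp : Kₚ = 0 ↔ K₀ = 0 := by
    rw [hLpo, hLpi] at hjp
    simpa [Complex.exp_ne_zero] using congrArg (· = 0) hjp
  have hm : Kₘ = 0 ↔ K₀ = 0 := by
    rw [hLmo, hLmi] at hjm
    simpa [Complex.exp_ne_zero] using congrArg (· = 0) hjm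
  have hK₀ : K₀ = 0 := by
    rcases le_total 0 (I * cexp (θ * I) * z).re with h | h
    · exact hp.1 (hg2.eq_zero_of_eqOn_mul_cexp_Ioi two_ne_zero ENNReal.ofNat_ne_top h hₚ)
    · exact hm.1 (hg2.eq_zero_of_eqOn_mul_cexp_Iio two_ne_zero ENNReal.ofNat_ne_top h hₘ)
  filter_upwards [(by simp [ae_iff] : ∀ᵐ t : ℝ, t ≠ ω), (by simp [ae_iff] : ∀ᵐ t : ℝ, t ≠ -ω)]
    with t h₁ h₂
  rcases lt_trichotomy t (-ω) with ht | rfl | ht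
  · simp [hₘ t ht, hm.2 hK₀]
  · exact absurd rfl h₂
  rcases lt_trichotomy t ω with ht' | rfl | ht'
  · simp [h₀ t ⟨ht, ht'⟩, hK₀]
  · exact absurd rfl h₁
  · simp [hₚ t ht', hp.2 hK₀]

noncomputable def resolventDefect (ω α β : ℝ) (z : ℂ) (vβ vα wα xα : ℝ → ℂ) : ℝ → ℂ :=
  (I / 2) • (vα - extMul ω (cexp (-((β - α) / 4 : ℝ) * I) ^ 2) vβ) -
    ((z * (Real.sin ((β - α) / 2) : ℂ)) • wα +
      ((Real.sin ((β - α) / 4) : ℂ) * cexp (((β - α) / 4 : ℝ) * I)) • xα)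

section resolventDefect

variable {ω α β : ℝ} {z : ℂ} {u vβ vβ' vα vα' wα wα' xα xα' : ℝ → ℂ}

theorem inDomDilated_resolventDefect (hω : 0 < ω) (hvβ : InDomDilated ω β vβ vβ')
    (hvα : InDomDilated ω α vα vα') (hwα : InDomDilated ω α wα wα')
    (hxα : InDomDilated ω α xα xα') :
    InDomDilated ω α (resolventDefect ω α β z vβ vα wα xα)
      (resolventDefect ω α β z vβ' vα' wα' xα') := by
  have hc : cexp (((α - β) / 2 : ℝ) * I) = cexp (-((β - α) / 4 : ℝ) * I) ^ 2 := by
    rw [← Complex.exp_nat_mul]; congr 1; push_cast; ring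
  rw [resolventDefect, resolventDefect, ← hc]
  exact ((hvα.sub (hvβ.extMul hω α)).const_smul _).sub
    ((hwα.const_smul _).add (hxα.const_smul _))

theorem dilatedD_resolventDefect
    (hrβ : ∀ᵐ t, DilatedD ω β vβ' t - z * vβ t = u t)
    (hrα : ∀ᵐ t, DilatedD ω α vα' t - z * vα t = u t)
    (hw : ∀ᵐ t, DilatedD ω α wα' t - z * wα t = chiExt ω t * vβ t)
    (hx : ∀ᵐ t, DilatedD ω α xα' t - z * xα t = chiExt ω t * u t) :
    ∀ᵐ t, DilatedD ω α (resolventDefect ω α β z vβ' vα' wα' xα') t =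
      z * resolventDefect ω α β z vβ vα wα xα t := by
  have hs4 := ofReal_sin_eq_cexp ((β - α) / 4)
  have hs2 := ofReal_sin_eq_cexp ((β - α) / 2)
  have hab : cexp (((β - α) / 4 : ℝ) * I) * cexp (-((β - α) / 4 : ℝ) * I) = 1 := by
    rw [← Complex.exp_add]; simp
  have hb2 : cexp (-((β - α) / 2 : ℝ) * I) = cexp (-((β - α) / 4 : ℝ) * I) ^ 2 := by
    rw [← Complex.exp_nat_mul]; congr 1; push_cast; ring
  have ha2 : cexp (((β - α) / 2 : ℝ) * I) = cexp (((β - α) / 4 : ℝ) * I) ^ 2 := by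
    rw [← Complex.exp_nat_mul]; congr 1; push_cast; ring
  have hβ : cexp (β * I) = cexp (α * I) * cexp (((β - α) / 4 : ℝ) * I) ^ 4 := by
    rw [← Complex.exp_nat_mul, ← Complex.exp_add]; congr 1; push_cast; ring
  rw [ha2, hb2] at hs2
  filter_upwards [hrβ, hrα, hw, hx] with t h1 h2 h3 h4
  simp only [sub_eq_iff_eq_add] at h1 h2 h3 h4
  simp only [resolventDefect]
  set a := cexp (((β - α) / 4 : ℝ) * I)
  set b := cexp (-((β - α) / 4 : ℝ) * I)
  set s2 : ℂ := ((Real.sin ((β - α) / 2) : ℝ) : ℂ)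
  set s4 : ℂ := ((Real.sin ((β - α) / 4) : ℝ) : ℂ)
  rcases lt_or_ge |t| ω with hin | hout
  · rw [dilatedD_eq_iff_of_abs_lt hin] at h1 h2 h3 h4 ⊢
    simp only [chiExt, if_neg (not_le.2 hin)] at h3 h4
    simp only [Pi.sub_apply, Pi.add_apply, Pi.smul_apply, smul_eq_mul, extMul_of_abs_lt hin]
    linear_combination (I / 2) * (h2 - h1) - z * s2 * h3 - s4 * a * h4
  · rw [dilatedD_eq_iff_of_le_abs hout] at h1 h2 h3 h4 ⊢
    simp only [chiExt, if_pos hout] at h3 h4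
    simp only [Pi.sub_apply, Pi.add_apply, Pi.smul_apply, smul_eq_mul, extMul_of_le_abs hout]
    rw [hβ] at h1
    linear_combination (I / 2) * h2 - (I / 2) * b ^ 2 * h1 - z * s2 * h3 - s4 * a * h4
      - I * cexp (α * I) * a * u t * hs4 - I * cexp (α * I) * z * vβ t * hs2
      - I * cexp (α * I) * (I / 2) * (u t * (1 + a ^ 2 * (a * b + 1))
        + z * vβ t * a ^ 2 * (a * b + 1)) * hab

theorem resolvent_formula_of_resolventDefect_eq_zero {t : ℝ}
    (ht : resolventDefect ω α β z vβ vα wα xα t = 0) :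
    (vβ t - vα t) / (2 * I) =
      z * (Real.sin ((β - α) / 2) : ℝ) * wα t +
        (Real.sin ((β - α) / 4) : ℝ) *
          (cexp (-((β - α) / 4 : ℝ) * I) * chiExt ω t * vβ t +
            cexp (((β - α) / 4 : ℝ) * I) * xα t) := by
  have hs4 := ofReal_sin_eq_cexp ((β - α) / 4)
  have hab : cexp (((β - α) / 4 : ℝ) * I) * cexp (-((β - α) / 4 : ℝ) * I) = 1 := by
    rw [← Complex.exp_add]; simp
  simp only [resolventDefect, Pi.sub_apply, Pi.add_apply, Pi.smul_apply, smul_eq_mul] at ht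
  set a := cexp (((β - α) / 4 : ℝ) * I)
  set b := cexp (-((β - α) / 4 : ℝ) * I)
  rw [div_eq_iff (mul_ne_zero two_ne_zero I_ne_zero)]
  by_cases hout : ω ≤ |t|
  · rw [extMul_of_le_abs hout] at ht
    rw [chiExt, if_pos hout]
    linear_combination 2 * I * ht + (a * b * vβ t - vα t) * I_sq - 2 * I * b * vβ t * hs4
      - vβ t * hab
  · rw [extMul_of_abs_lt (not_le.1 hout)] at ht
    rw [chiExt, if_neg hout]
    linear_combination 2 * I * ht + (vβ t - vα t) * I_sq

end resolventDefect

/-- Here `vβ = r_{iβ}(z)u`, `vα = r_{iα}(z)u`, `wα = r_{iα}(z)(χ_e vβ)` and `xα = r_{iα}(z)(χ_e u)`,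
each given together with its derivative. -/
theorem resolvent_difference_formula_general
    (ω α β : ℝ) (hω : 0 < ω) (z : ℂ)
    (u vβ vβ' vα vα' wα wα' xα xα' : ℝ → ℂ)
    (hvβ : InDomDilated ω β vβ vβ') (hvα : InDomDilated ω α vα vα')
    (hwα : InDomDilated ω α wα wα') (hxα : InDomDilated ω α xα xα')
    (hrβ : ∀ᵐ t ∂(volume : Measure ℝ), DilatedD ω β vβ' t - z * vβ t = u t)
    (hrα : ∀ᵐ t ∂(volume : Measure ℝ), DilatedD ω α vα' t - z * vα t = u t)
    (hw : ∀ᵐ t ∂(volume : Measure ℝ),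
      DilatedD ω α wα' t - z * wα t = chiExt ω t * vβ t)
    (hx : ∀ᵐ t ∂(volume : Measure ℝ),
      DilatedD ω α xα' t - z * xα t = chiExt ω t * u t) :
    ∀ᵐ t ∂(volume : Measure ℝ),
      (vβ t - vα t) / (2 * Complex.I) =
        z * (Real.sin ((β - α) / 2) : ℝ) * wα t +
        (Real.sin ((β - α) / 4) : ℝ) *
          (Complex.exp (-((β - α) / 4 : ℝ) * Complex.I) * chiExt ω t * vβ t +
            Complex.exp (((β - α) / 4 : ℝ) * Complex.I) * xα t) := by
  filter_upwards [(inDomDilated_resolventDefect hω hvβ hvα hwα hxα).ae_eq_zero_of_dilatedD_eq_mul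
    hω (dilatedD_resolventDefect hrβ hrα hw hx)] with t ht
  exact resolvent_formula_of_resolventDefect_eq_zero ht

/-- resolvent difference formula
`(r_{iβ}(z) − r_{iα}(z))/(2i) = z sin((β−α)/2) r_{iα} χ_e r_{iβ}
  + sin((β−α)/4)(e^{−i(β−α)/4} χ_e r_{iβ} + e^{i(β−α)/4} r_{iα} χ_e)`,
expressed through the solutions `vβ = r_{iβ}(z)u`, `vα = r_{iα}(z)u`,
`wα = r_{iα}(z)(χ_e vβ)`, `xα = r_{iα}(z)(χ_e u)`, for `z` in both resolvent sets
(`z ∉ e^{−iβ}ℝ ∪ e^{−iα}ℝ`). -/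
theorem resolvent_difference_formula
    (ω α β : ℝ) (hω : 0 < ω) (z : ℂ)
    (hzβ : ∀ t : ℝ, z ≠ Complex.exp (-(β : ℝ) * Complex.I) * (t : ℂ))
    (hzα : ∀ t : ℝ, z ≠ Complex.exp (-(α : ℝ) * Complex.I) * (t : ℂ))
    (u vβ vβ' vα vα' wα wα' xα xα' : ℝ → ℂ)
    (hvβ : InDomDilated ω β vβ vβ') (hvα : InDomDilated ω α vα vα')
    (hwα : InDomDilated ω α wα wα') (hxα : InDomDilated ω α xα xα')
    (hrβ : ∀ᵐ t ∂(volume : Measure ℝ), DilatedD ω β vβ' t - z * vβ t = u t)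
    (hrα : ∀ᵐ t ∂(volume : Measure ℝ), DilatedD ω α vα' t - z * vα t = u t)
    (hw : ∀ᵐ t ∂(volume : Measure ℝ),
      DilatedD ω α wα' t - z * wα t = chiExt ω t * vβ t)
    (hx : ∀ᵐ t ∂(volume : Measure ℝ),
      DilatedD ω α xα' t - z * xα t = chiExt ω t * u t) :
    ∀ᵐ t ∂(volume : Measure ℝ),
      (vβ t - vα t) / (2 * Complex.I) =
        z * (Real.sin ((β - α) / 2) : ℝ) * wα t +
        (Real.sin ((β - α) / 4) : ℝ) *
          (Complex.exp (-((β - α) / 4 : ℝ) * Complex.I) * chiExt ω t * vβ t +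
            Complex.exp (((β - α) / 4 : ℝ) * Complex.I) * xα t) :=
  resolvent_difference_formula_general ω α β hω z u vβ vβ' vα vα' wα wα' xα xα' hvβ hvα hwα hxα hrβ
    hrα hw hx
end
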